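/- Let k, s be naturals with 1 ≤ k < s and s a prime power, and set d = k·s. Suppose there exist a k × k real orthogonal matrix Y and a real ε ≥ 0 such that |Y_{ij}| ≤ (1 + ε)/√k for all indices i, j. Then there exist s real orthogonal matrices M₁, …, M_s of order d (whose columns form s orthonormal bases of ℝ^d) such that for all l ≠ m and all column indices i, j, the inner product of the i-th column of M_l with the j-th column of M_m satisfies |((M_l)ᵀ · M_m)_{ij}| ≤ (1 + ε)²/k. -/

import Mathlib

/-!
Take a field `F` with `s` elements and an injection `ι : Fin k → F`, and index rows and columns by
`Fin k × F`. The `(a, t)` column of the `l`-th matrix carries the `a`-th row of `Y` on the points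
`(b, t + l · ι b)` of the line of slope `l` and intercept `t`. Within one matrix, columns on distinct
(parallel) lines have disjoint supports and those on a common line are orthonormal because the rows
of `Y` are. Lines of distinct slopes meet in at most one point, so across matrices an inner product
is a single product `Y a b * Y a' b`, of size at most `((1 + ε) / √k)²`.
-/

open Matrix Finset
open scoped Kronecker

variable {α κ F R : Type*}

def affineLineMatrix [Ring F] [DecidableEq F] [Zero R] (Y : Matrix α κ R) (ι : κ → F) (l : F) :
    Matrix (κ × F) (α × F) R :=
  of fun bu at' => if bu.2 = at'.2 + l * ι bu.1 then Y at'.1 bu.1 else 0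

theorem card_filter_add_mul_eq_le_one [Fintype κ] [Ring F] [NoZeroDivisors F] [DecidableEq F]
    {ι : κ → F} (hι : Function.Injective ι) {l m : F} (hlm : l ≠ m) (t t' : F) :
    #{b | t + l * ι b = t' + m * ι b} ≤ 1 := by
  refine card_le_one.2 fun b hb b' hb' => hι ?_
  simp only [mem_filter, mem_univ, true_and] at hb hb'
  have : (l - m) * (ι b - ι b') = 0 :=
    calc (l - m) * (ι b - ι b')
        = (t + l * ι b - (t + l * ι b')) - (t' + m * ι b - (t' + m * ι b')) := by noncomm_ring
      _ = 0 := by rw [hb, hb', sub_self]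
  exact sub_eq_zero.1 ((mul_eq_zero.1 this).resolve_left (sub_ne_zero.2 hlm))

theorem abs_sum_le_of_card_le_one {ι R : Type*} [AddCommGroup R] [LinearOrder R]
    [IsOrderedAddMonoid R] {s : Finset ι} (hs : #s ≤ 1) {f : ι → R} {C : R} (hf : ∀ i ∈ s, |f i| ≤ C) (hC : 0 ≤ C) : |∑ i ∈ s, f i| ≤ C :=
  calc |∑ i ∈ s, f i| ≤ ∑ i ∈ s, |f i| := abs_sum_le_sum_abs _ _
    _ ≤ #s • C := sum_le_card_nsmul _ _ _ hf
    _ ≤ C := by simpa using nsmul_le_nsmul_left hC hs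

section
variable [Fintype κ] [Ring F] [Fintype F] [DecidableEq F]

theorem transpose_affineLineMatrix_mul_apply [NonUnitalNonAssocSemiring R] (Y : Matrix α κ R)
    (ι : κ → F) (l m : F) (a a' : α) (t t' : F) :
    ((affineLineMatrix Y ι l)ᵀ * affineLineMatrix Y ι m) (a, t) (a', t') =
      ∑ b with t + l * ι b = t' + m * ι b, Y a b * Y a' b := by
  simp only [mul_apply, Fintype.sum_prod_type, transpose_apply, affineLineMatrix, of_apply,
    ite_mul, mul_ite, zero_mul, mul_zero, sum_ite_eq', mem_univ, if_true, sum_filter]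
  exact sum_congr rfl fun b _ => if_congr eq_comm rfl rfl

theorem transpose_affineLineMatrix_mul_self [DecidableEq α] [NonAssocSemiring R]
    (Y : Matrix α κ R) (ι : κ → F) (l : F) :
    (affineLineMatrix Y ι l)ᵀ * affineLineMatrix Y ι l = (Y * Yᵀ) ⊗ₖ (1 : Matrix F F R) := by
  ext ⟨a, t⟩ ⟨a', t'⟩
  rw [transpose_affineLineMatrix_mul_apply, kronecker_apply, one_apply, mul_apply]
  by_cases h : t = t'
  · simp only [h, filter_true, transpose_apply, ↓reduceIte, mul_one]
  · simp only [add_left_inj, h, filter_false, sum_empty, ↓reduceIte, mul_zero]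

theorem abs_transpose_affineLineMatrix_mul_apply_le [NoZeroDivisors F] [CommRing R]
    [LinearOrder R] [IsOrderedRing R]
    {Y : Matrix α κ R} {B : R} (hY : ∀ i j, |Y i j| ≤ B) {ι : κ → F} (hι : Function.Injective ι)
    {l m : F} (hlm : l ≠ m) (a a' : α) (t t' : F) :
    |((affineLineMatrix Y ι l)ᵀ * affineLineMatrix Y ι m) (a, t) (a', t')| ≤ B ^ 2 := by
  rw [transpose_affineLineMatrix_mul_apply]
  refine abs_sum_le_of_card_le_one (card_filter_add_mul_eq_le_one hι hlm t t')
    (fun b _ => ?_) (sq_nonneg B)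
  rw [abs_mul, sq]
  exact mul_le_mul (hY a b) (hY a' b) (abs_nonneg _) ((abs_nonneg _).trans (hY a b))

theorem exists_orthogonal_family_of_injective [NoZeroDivisors F] [CommRing R] [LinearOrder R]
    [IsOrderedRing R] [DecidableEq κ] {Y : Matrix κ κ R} (hY : Y * Yᵀ = 1) {B : R}
    (hYB : ∀ i j, |Y i j| ≤ B) {ι : κ → F} (hι : Function.Injective ι) :
    ∃ M : F → Matrix (κ × F) (κ × F) R, (∀ l, M l * (M l)ᵀ = 1) ∧
      ∀ l m, l ≠ m → ∀ i j, |((M l)ᵀ * M m) i j| ≤ B ^ 2 := by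
  refine ⟨affineLineMatrix Y ι, fun l => ?_, fun l m hlm ⟨a, t⟩ ⟨a', t'⟩ => ?_⟩
  · rw [mul_eq_one_comm, transpose_affineLineMatrix_mul_self, hY, one_kronecker_one]
  · exact abs_transpose_affineLineMatrix_mul_apply_le hYB hι hlm a a' t t'

end

theorem IsPrimePow.exists_finiteField {s : ℕ} (hs : IsPrimePow s) :
    ∃ (F : Type) (_ : Field F) (_ : Fintype F), Fintype.card F = s := by
  obtain ⟨p, n, hp, hn, rfl⟩ := hs
  have : Fact p.Prime := ⟨hp.nat_prime⟩
  let : Fintype (GaloisField p n) := Fintype.ofFinite _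
  refine ⟨GaloisField p n, inferInstance, inferInstance, ?_⟩
  rw [← Nat.card_eq_fintype_card]
  exact GaloisField.card p n hn.ne'

theorem stmt_19_general (k s : ℕ) (hks : k < s) (hs : IsPrimePow s)
    (Y : Matrix (Fin k) (Fin k) ℝ) (hY : Y * Yᵀ = 1)
    (ε : ℝ) (hYent : ∀ i j, |Y i j| ≤ (1 + ε) / Real.sqrt k) :
    ∃ M : Fin s → Matrix (Fin (k * s)) (Fin (k * s)) ℝ,
      (∀ l, M l * (M l)ᵀ = 1) ∧
      ∀ l m, l ≠ m → ∀ i j, |((M l)ᵀ * M m) i j| ≤ (1 + ε) ^ 2 / k := by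
  classical
  obtain ⟨F, _, _, hF⟩ := hs.exists_finiteField
  let e : Fin s ≃ F := (Fintype.equivFinOfCardEq hF).symm
  let φ : Fin k × F ≃ Fin (k * s) := (Equiv.prodCongr (Equiv.refl _) e.symm).trans finProdFinEquiv
  obtain ⟨N, hN, hcross⟩ := exists_orthogonal_family_of_injective hY hYent
    (e.injective.comp (Fin.castLE_injective hks.le))
  have hB : ((1 + ε) / √k) ^ 2 = (1 + ε) ^ 2 / k := by rw [div_pow, Real.sq_sqrt k.cast_nonneg]
  refine ⟨fun l => (N (e l)).submatrix φ.symm φ.symm, fun l => ?_, fun l m hlm i j => ?_⟩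
  · rw [transpose_submatrix, submatrix_mul_equiv, hN, submatrix_one_equiv]
  · rw [transpose_submatrix, submatrix_mul_equiv, submatrix_apply, ← hB]
    exact hcross _ _ (e.injective.ne hlm) _ _

theorem stmt_19 (k s : ℕ) (hk : 1 ≤ k) (hks : k < s) (hs : IsPrimePow s)
    (Y : Matrix (Fin k) (Fin k) ℝ) (hY : Y * Yᵀ = 1)
    (ε : ℝ) (hε : 0 ≤ ε) (hYent : ∀ i j, |Y i j| ≤ (1 + ε) / Real.sqrt k) :
    ∃ M : Fin s → Matrix (Fin (k * s)) (Fin (k * s)) ℝ,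
      (∀ l, M l * (M l)ᵀ = 1) ∧
      ∀ l m, l ≠ m → ∀ i j, |((M l)ᵀ * M m) i j| ≤ (1 + ε) ^ 2 / k :=
  stmt_19_general k s hks hs Y hY ε hYent
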